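/- Let C be a tensor code of dimension k in 𝔽 and let j ∈ {1,…,k}. If C is j-TBMD with respect to 𝒜^R, then C is j-TMRD with respect to 𝒜^R. -/

import Mathlib

open Module Function

namespace TensorPaper

variable {F : Type*} [Field F] [Fintype F]

/-- The tensor space `𝔽 = 𝔽_q^{n₁} ⊗ ⋯ ⊗ 𝔽_q^{n_r}`, identified with `r`-dimensional arrays. -/
abbrev TSpace (F : Type*) {r : ℕ} (n : Fin r → ℕ) : Type _ := (∀ i, Fin (n i)) → F

/-- The dual code with respect to the standard bilinear form `X*Y = ∑ X_m Y_m`. -/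
def dualCode {ι : Type*} [Fintype ι] (C : Submodule F (ι → F)) : Submodule F (ι → F) where
  carrier := { X | ∀ Y ∈ C, ∑ m, X m * Y m = 0 }
  add_mem' := by
    intro a b ha hb Y hY
    have h1 := ha Y hY
    have h2 := hb Y hY
    simp only [Pi.add_apply, add_mul]
    rw [Finset.sum_add_distrib, h1, h2, add_zero]
  zero_mem' := by
    intro Y _
    simp
  smul_mem' := by
    intro c a ha Y hY
    have h1 := ha Y hY
    simp only [Pi.smul_apply, smul_eq_mul, mul_assoc]
    rw [← Finset.mul_sum, h1, mul_zero]

/-- The array corresponding to a simple (rank-one) tensor `x⁽¹⁾ ⊗ ⋯ ⊗ x⁽ʳ⁾`. -/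
def simpleTensor {r : ℕ} (n : Fin r → ℕ) (x : ∀ i, Fin (n i) → F) : TSpace F n :=
  fun m => ∏ i, x i (m i)

/-- The closure-type anticode `A⁽¹⁾ ⊗ ⋯ ⊗ A⁽ʳ⁾`: the span of all simple tensors whose
`i`-th factor lies in `U i`. -/
def closureAnticode {r : ℕ} (n : Fin r → ℕ) (U : ∀ i, Submodule F (Fin (n i) → F)) :
    Submodule F (TSpace F n) :=
  Submodule.span F { X | ∃ x : ∀ i, Fin (n i) → F, (∀ i, x i ∈ U i) ∧ X = simpleTensor n x }

/-- The family `𝒜^cl` of closure-type anticodes. -/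
def ClosureAnticodes {r : ℕ} (n : Fin r → ℕ) : Set (Submodule F (TSpace F n)) :=
  { A | ∃ U : ∀ i, Submodule F (Fin (n i) → F), A = closureAnticode n U }

/-- The family `𝒜^R` of Ravagnani-type anticodes:
`𝔽^{n₁} ⊗ ⋯ ⊗ A^{(i)} ⊗ ⋯ ⊗ 𝔽^{n_r}` with `n_i = n₁`. -/
def RavagnaniAnticodes {r : ℕ} (n : Fin (r + 2) → ℕ) : Set (Submodule F (TSpace F n)) :=
  { A | ∃ (i : Fin (r + 2)) (U : Submodule F (Fin (n i) → F)),
      n i = n 0 ∧ A = closureAnticode n (Function.update (fun s => ⊤) i U) }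

/-- The family `𝒜^D` of Delsarte-type anticodes:
`𝔽^{n₁} ⊗ ⋯ ⊗ A^{(i)} ⊗ ⋯ ⊗ 𝔽^{n_r}` with `i ≠ p` for some `p` with `n_p = n_r`. -/
def DelsarteAnticodes {r : ℕ} (n : Fin (r + 2) → ℕ) : Set (Submodule F (TSpace F n)) :=
  { A | ∃ (p i : Fin (r + 2)), n p = n (Fin.last (r + 1)) ∧ i ≠ p ∧
      ∃ U : Submodule F (Fin (n i) → F),
        A = closureAnticode n (Function.update (fun s => ⊤) i U) }

/-- The `j`-th tensor weight `t_j^R` of `C` with respect to `𝒜^R`, with the convention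
`t^R({0}) = n + n/n₁`. -/
noncomputable def tR {r : ℕ} (n : Fin (r + 2) → ℕ) (j : ℕ) (C : Submodule F (TSpace F n)) : ℕ := by
  classical exact
    if C = ⊥ then (∏ i, n i) + (∏ i, n i) / n 0
    else sInf { a | ∃ A ∈ RavagnaniAnticodes n, j ≤ finrank F ↥(C ⊓ A) ∧ finrank F ↥A = a }

/-- The `j`-th tensor weight `t_j^D` of `C` with respect to `𝒜^D`. -/
noncomputable def tD {r : ℕ} (n : Fin (r + 2) → ℕ) (j : ℕ) (C : Submodule F (TSpace F n)) : ℕ :=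
  sInf { a | ∃ A ∈ DelsarteAnticodes n, j ≤ finrank F ↥(C ⊓ A) ∧ finrank F ↥A = a }

/-- The `j`-th tensor weight `t_j^cl` of `C` with respect to `𝒜^cl`. -/
noncomputable def tCl {r : ℕ} (n : Fin r → ℕ) (j : ℕ) (C : Submodule F (TSpace F n)) : ℕ :=
  sInf { a | ∃ A ∈ ClosureAnticodes n, j ≤ finrank F ↥(C ⊓ A) ∧ finrank F ↥A = a }

/-- The `j`-th dual tensor weight `s_j^cl` of `C` with respect to the dual anticodes
`𝒜̄^cl = {A^⊥ : A ∈ 𝒜^cl}`. -/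
noncomputable def sCl {r : ℕ} (n : Fin r → ℕ) (j : ℕ) (C : Submodule F (TSpace F n)) : ℕ :=
  sInf { a | ∃ A ∈ ClosureAnticodes n,
    j ≤ finrank F ↥(C ⊓ dualCode A) ∧ finrank F ↥(dualCode A) = a }

/-- `C` is `j`-TMRD with respect to `𝒜^R`: `t_j^R(C) = n − (n/n₁)⌊(n₁/n)(k−j)⌋`. -/
def isTMRD {r : ℕ} (n : Fin (r + 2) → ℕ) (j : ℕ) (C : Submodule F (TSpace F n)) : Prop :=
  tR n j C = (∏ i, n i) - ((∏ i, n i) / n 0) * (n 0 * (finrank F ↥C - j) / ∏ i, n i)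

/-- `C` is `j`-TBMD with respect to `𝒜^R`: `n − t_j^R(C) − t₁^R(C^⊥) < 0`. -/
def isTBMD {r : ℕ} (n : Fin (r + 2) → ℕ) (j : ℕ) (C : Submodule F (TSpace F n)) : Prop :=
  ((∏ i, n i : ℕ) : ℤ) - tR n j C - tR n 1 (dualCode C) < 0

/-- The Gaussian binomial coefficient `[a choose b]_q`, equal to `0` if `a < b`. -/
noncomputable def qBinom (q : ℕ) (a : ℤ) (b : ℕ) : ℚ :=
  if a < (b : ℤ) then 0
  else ∏ i ∈ Finset.range b, ((q : ℚ) ^ (a - i).toNat - 1) / ((q : ℚ) ^ (i + 1) - 1)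

/-- The `(a,j)`-th tensor binomial moment of `C` with respect to `𝒜^R`. -/
noncomputable def BR {r : ℕ} (n : Fin (r + 2) → ℕ) (j : ℕ) (C : Submodule F (TSpace F n))
    (a : ℕ) : ℚ :=
  ∑ᶠ A ∈ (RavagnaniAnticodes n ∩ {A | finrank F ↥A = a}),
    qBinom (Fintype.card F) (finrank F ↥(C ⊓ A)) j

/-- The `(a,j)`-th entry of the weight distribution of `C` with respect to `𝒜^R`. -/
noncomputable def WR {r : ℕ} (n : Fin (r + 2) → ℕ) (j : ℕ) (C : Submodule F (TSpace F n))
    (a : ℕ) : ℚ :=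
  ∑ᶠ A ∈ (RavagnaniAnticodes n ∩ {A | finrank F ↥A = a}),
    (Nat.card {D : Submodule F (TSpace F n) //
      D ≤ C ⊓ A ∧ finrank F ↥D = j ∧
      ∀ B ∈ RavagnaniAnticodes n, D ≤ B → B ≤ A → B = A} : ℚ)

/-- The `(a,j)`-th tensor binomial moment of `C` with respect to `𝒜^D`. -/
noncomputable def BD {r : ℕ} (n : Fin (r + 2) → ℕ) (j : ℕ) (C : Submodule F (TSpace F n))
    (a : ℕ) : ℚ :=
  ∑ᶠ A ∈ (DelsarteAnticodes n ∩ {A | finrank F ↥A = a}),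
    qBinom (Fintype.card F) (finrank F ↥(C ⊓ A)) j

/-- The `(a,j)`-th entry of the weight distribution of `C` with respect to `𝒜^D`. -/
noncomputable def WD {r : ℕ} (n : Fin (r + 2) → ℕ) (j : ℕ) (C : Submodule F (TSpace F n))
    (a : ℕ) : ℚ :=
  ∑ᶠ A ∈ (DelsarteAnticodes n ∩ {A | finrank F ↥A = a}),
    (Nat.card {D : Submodule F (TSpace F n) //
      D ≤ C ⊓ A ∧ finrank F ↥D = j ∧
      ∀ B ∈ DelsarteAnticodes n, D ≤ B → B ≤ A → B = A} : ℚ)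

/-- The `(a,j)`-th normalized tensor binomial moment of `C` with respect to `𝒜^R`. -/
noncomputable def bR {r : ℕ} (n : Fin (r + 2) → ℕ) (j : ℕ) (C : Submodule F (TSpace F n))
    (a : ℤ) : ℚ :=
  if a < 0 then 0
  else if a ≤ ((∏ i, n i : ℕ) : ℤ) - tR n j C - tR n 1 (dualCode C) then
    BR n j C (a.toNat + tR n j C) /
      ((RavagnaniAnticodes (F := F) n ∩ {A | finrank F ↥A = a.toNat + tR n j C}).ncard : ℚ)
  else if ((∏ i, n i : ℕ) : ℤ) ∣ a * n 0 then
    qBinom (Fintype.card F) ((finrank F ↥C : ℤ) + a + tR n j C - (∏ i, n i : ℕ)) j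
  else 0

/-- The `j`-th tensor zeta function of `C` with respect to `𝒜^R`. -/
noncomputable def ZR {r : ℕ} (n : Fin (r + 2) → ℕ) (j : ℕ) (C : Submodule F (TSpace F n)) :
    PowerSeries ℚ :=
  PowerSeries.mk fun a => bR n j C (a : ℤ)

/-- The `q`-Bernstein polynomial `𝓑_{b,a}(X,Y;q)`. -/
noncomputable def qBernstein {R : Type*} [CommRing R] [Algebra ℚ R] (q : ℕ) (b a : ℕ)
    (X Y : R) : R :=
  algebraMap ℚ R (qBinom q (b : ℤ) a) * Y ^ a *
    ∏ c ∈ Finset.range (b - a), (X - (q : R) ^ c * Y)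

/-- The closure-type anticodes with dimension distribution `𝔞`. -/
def closureAnticodesOf {r : ℕ} (n : Fin r → ℕ) (𝔞 : Fin r → ℕ) :
    Set (Submodule F (TSpace F n)) :=
  { A | ∃ U : ∀ i, Submodule F (Fin (n i) → F),
      (∀ i, finrank F ↥(U i) = 𝔞 i) ∧ A = closureAnticode n U }

/-- The refined tensor binomial moment `B_𝔞^{(cl,j)}(C)`. -/
noncomputable def BCl {r : ℕ} (n : Fin r → ℕ) (j : ℕ) (C : Submodule F (TSpace F n))
    (𝔞 : Fin r → ℕ) : ℚ :=
  ∑ᶠ A ∈ closureAnticodesOf n 𝔞, qBinom (Fintype.card F) (finrank F ↥(C ⊓ A)) j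

/-- The refined weight distribution `W_𝔞^{(cl,j)}(C)`. -/
noncomputable def WCl {r : ℕ} (n : Fin r → ℕ) (j : ℕ) (C : Submodule F (TSpace F n))
    (𝔞 : Fin r → ℕ) : ℚ :=
  ∑ᶠ A ∈ closureAnticodesOf n 𝔞,
    (Nat.card {D : Submodule F (TSpace F n) //
      D ≤ C ⊓ A ∧ finrank F ↥D = j ∧
      ∀ B ∈ ClosureAnticodes n, D ≤ B → B ≤ A → B = A} : ℚ)

/-- The refined tensor binomial moment `B_𝔞^{(D,j)}(C)` for Delsarte-type anticodes. -/
noncomputable def BDref {r : ℕ} (n : Fin (r + 2) → ℕ) (j : ℕ) (C : Submodule F (TSpace F n))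
    (𝔞 : Fin (r + 2) → ℕ) : ℚ :=
  ∑ᶠ A ∈ (DelsarteAnticodes n ∩ closureAnticodesOf n 𝔞),
    qBinom (Fintype.card F) (finrank F ↥(C ⊓ A)) j

/-- The refined tensor binomial moment `B_𝔞^{(R,j)}(C)` for Ravagnani-type anticodes. -/
noncomputable def BRref {r : ℕ} (n : Fin (r + 2) → ℕ) (j : ℕ) (C : Submodule F (TSpace F n))
    (𝔞 : Fin (r + 2) → ℕ) : ℚ :=
  ∑ᶠ A ∈ (RavagnaniAnticodes n ∩ closureAnticodesOf n 𝔞),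
    qBinom (Fintype.card F) (finrank F ↥(C ⊓ A)) j

/-- The power series `P(T^m)` obtained from a polynomial `P` by substituting `T^m`. -/
noncomputable def substPow (P : Polynomial ℚ) (m : ℕ) : PowerSeries ℚ :=
  ∑ i ∈ Finset.range (P.natDegree + 1), PowerSeries.C (P.coeff i) * PowerSeries.X ^ (m * i)


section Fiber

variable {r' : ℕ} {n : Fin r' → ℕ} {i : Fin r'}

/-- The submodule of tensors all of whose `i`-fibers lie in `U`. -/
def fiberSubmodule (n : Fin r' → ℕ) (i : Fin r') (U : Submodule F (Fin (n i) → F)) :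
    Submodule F (TSpace F n) where
  carrier := {X | ∀ m : ∀ s, Fin (n s), (fun a => X (Function.update m i a)) ∈ U}
  add_mem' := by intro a b ha hb m; exact U.add_mem (ha m) (hb m)
  zero_mem' := by intro m; exact U.zero_mem
  smul_mem' := by intro c X hX m; exact U.smul_mem c (hX m)

lemma mem_fiberSubmodule {U : Submodule F (Fin (n i) → F)} {X : TSpace F n} :
    X ∈ fiberSubmodule n i U ↔ ∀ m : ∀ s, Fin (n s), (fun a => X (Function.update m i a)) ∈ U :=
  Iff.rfl

lemma closureAnticode_update_eq (hni : 0 < n i) (U : Submodule F (Fin (n i) → F)) :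
    closureAnticode n (Function.update (fun s => (⊤ : Submodule F (Fin (n s) → F))) i U)
      = fiberSubmodule n i U := by
  classical
  apply le_antisymm
  · rw [closureAnticode, Submodule.span_le]
    rintro X ⟨x, hx, rfl⟩
    intro m
    have hxi : x i ∈ U := by
      have := hx i
      rwa [Function.update_self] at this
    have : (fun a => simpleTensor n x (Function.update m i a))
        = (∏ s ∈ Finset.univ.erase i, x s (m s)) • x i := by
      funext a
      simp only [simpleTensor, Pi.smul_apply, smul_eq_mul]
      rw [← Finset.mul_prod_erase Finset.univ (fun s => x s (Function.update m i a s))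
        (Finset.mem_univ i), Function.update_self]
      rw [mul_comm]
      congr 1
      apply Finset.prod_congr rfl
      intro s hs
      rw [Function.update_of_ne (Finset.ne_of_mem_erase hs)]
    rw [this]
    exact U.smul_mem _ hxi
  · intro X hX
    set z : Fin (n i) := ⟨0, hni⟩ with hz
    set xx : (∀ s, Fin (n s)) → ∀ s, Fin (n s) → F := fun m =>
      Function.update (fun s => fun b => if b = m s then (1:F) else 0) i
        (fun a => X (Function.update m i a)) with hxx
    have hkey : X = ∑ m ∈ Finset.univ.filter (fun m : ∀ s, Fin (n s) => m i = z),
        simpleTensor n (xx m) := by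
      funext m''
      rw [Finset.sum_apply]
      rw [Finset.sum_eq_single_of_mem (Function.update m'' i z)]
      · simp only [simpleTensor, hxx]
        rw [← Finset.mul_prod_erase Finset.univ _ (Finset.mem_univ i), Function.update_self]
        have h1 : X (Function.update (Function.update m'' i z) i (m'' i)) = X m'' := by
          rw [Function.update_idem, Function.update_eq_self]
        rw [h1]
        have h2 : ∀ s ∈ Finset.univ.erase i,
            (Function.update (fun s => fun b => if b = Function.update m'' i z s then (1:F) else 0) i
              (fun a => X (Function.update (Function.update m'' i z) i a))) s (m'' s) = 1 := by
          intro s hs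
          have hsne : s ≠ i := Finset.ne_of_mem_erase hs
          rw [Function.update_of_ne hsne, Function.update_of_ne hsne, if_pos rfl]
        rw [Finset.prod_congr rfl h2, Finset.prod_const_one, mul_one]
      · simp [Function.update_self]
      · intro m hm hne
        have hmi : m i = z := (Finset.mem_filter.mp hm).2
        -- there is s ≠ i with m s ≠ m'' s
        have : ∃ s, s ≠ i ∧ m s ≠ m'' s := by
          by_contra hc
          push_neg at hc
          apply hne
          funext s
          by_cases hsi : s = i
          · subst hsi; rw [Function.update_self, hmi]
          · rw [Function.update_of_ne hsi]; exact hc s hsi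
        obtain ⟨s, hsne, hsval⟩ := this
        simp only [simpleTensor, hxx]
        apply Finset.prod_eq_zero (Finset.mem_univ s)
        rw [Function.update_of_ne hsne, if_neg (fun hh => hsval hh.symm)]
    rw [hkey]
    apply Submodule.sum_mem
    intro m hm
    apply Submodule.subset_span
    refine ⟨xx m, fun s => ?_, rfl⟩
    simp only [hxx]
    by_cases hsi : s = i
    · subst hsi
      simp only [Function.update_self]
      exact hX m
    · simp only [Function.update_of_ne hsi]
      exact Submodule.mem_top

/-- The equivalence between index tuples and (base point, fiber coordinate) pairs. -/
def baseEquiv (hni : 0 < n i) :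
    (∀ s, Fin (n s)) ≃ {m : ∀ s, Fin (n s) // m i = ⟨0, hni⟩} × Fin (n i) where
  toFun m := (⟨Function.update m i ⟨0, hni⟩, Function.update_self _ _ _⟩, m i)
  invFun p := Function.update p.1.1 i p.2
  left_inv m := by simp [Function.update_idem]
  right_inv p := by
    obtain ⟨⟨m', hm'⟩, a⟩ := p
    refine Prod.ext (Subtype.ext ?_) ?_
    · show Function.update (Function.update m' i a) i ⟨0, hni⟩ = m'
      rw [Function.update_idem, ← hm', Function.update_eq_self]
    · exact Function.update_self _ _ _

lemma card_base (hni : 0 < n i) :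
    Fintype.card {m : ∀ s, Fin (n s) // m i = ⟨0, hni⟩}
      = ∏ s ∈ Finset.univ.erase i, n s := by
  have h := Fintype.card_congr (baseEquiv hni)
  rw [Fintype.card_prod, Fintype.card_fin, Fintype.card_pi] at h
  simp only [Fintype.card_fin] at h
  apply Nat.eq_of_mul_eq_mul_right hni
  rw [← h, ← Finset.mul_prod_erase Finset.univ n (Finset.mem_univ i), mul_comm]

lemma sum_fiber {M : Type*} [AddCommMonoid M] (hni : 0 < n i) (f : (∀ s, Fin (n s)) → M) :
    ∑ m, f m = ∑ m' : {m : ∀ s, Fin (n s) // m i = ⟨0, hni⟩},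
      ∑ a, f (Function.update m'.1 i a) := by
  rw [Fintype.sum_equiv (baseEquiv hni) f (fun p => f (Function.update p.1.1 i p.2))
    (fun m => by
      show f m = f (Function.update (Function.update m i ⟨0, hni⟩) i (m i))
      rw [Function.update_idem, Function.update_eq_self])]
  exact Fintype.sum_prod_type _

/-- A tensor with fibers in `U` is determined by its fibers over base points. -/
noncomputable def fiberLinearEquiv (hni : 0 < n i) (U : Submodule F (Fin (n i) → F)) :
    fiberSubmodule n i U ≃ₗ[F] ({m : ∀ s, Fin (n s) // m i = ⟨0, hni⟩} → U) where
  toFun X := fun m' => ⟨fun a => X.1 (Function.update m'.1 i a), X.2 m'.1⟩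
  map_add' X Y := rfl
  map_smul' c X := rfl
  invFun g := ⟨fun m'' => (g ⟨Function.update m'' i ⟨0, hni⟩, Function.update_self _ _ _⟩ :
      Fin (n i) → F) (m'' i), by
    intro m
    have : (fun a => (g ⟨Function.update (Function.update m i a) i ⟨0, hni⟩,
        Function.update_self _ _ _⟩ : Fin (n i) → F) ((Function.update m i a) i))
        = (g ⟨Function.update m i ⟨0, hni⟩, Function.update_self _ _ _⟩ : Fin (n i) → F) := by
      funext a
      rw [Function.update_self]
      have he : (⟨Function.update (Function.update m i a) i ⟨0, hni⟩,
          Function.update_self _ _ _⟩ : {m : ∀ s, Fin (n s) // m i = ⟨0, hni⟩})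
          = ⟨Function.update m i ⟨0, hni⟩, Function.update_self _ _ _⟩ :=
        Subtype.ext (by
          show Function.update (Function.update m i a) i ⟨0, hni⟩
            = Function.update m i ⟨0, hni⟩
          rw [Function.update_idem])
      rw [he]
    show (fun a => (g ⟨Function.update (Function.update m i a) i ⟨0, hni⟩,
        Function.update_self _ _ _⟩ : Fin (n i) → F) ((Function.update m i a) i)) ∈ U
    rw [this]
    exact (g _).2⟩
  left_inv X := by
    apply Subtype.ext
    funext m''
    show X.1 (Function.update (Function.update m'' i ⟨0, hni⟩) i (m'' i)) = X.1 m''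
    rw [Function.update_idem, Function.update_eq_self]
  right_inv g := by
    funext m'
    apply Subtype.ext
    funext a
    show (g ⟨Function.update (Function.update m'.1 i a) i ⟨0, hni⟩, _⟩ : Fin (n i) → F)
        ((Function.update m'.1 i a) i) = (g m' : Fin (n i) → F) a
    rw [Function.update_self]
    have he : (⟨Function.update (Function.update m'.1 i a) i ⟨0, hni⟩,
        Function.update_self _ _ _⟩ : {m : ∀ s, Fin (n s) // m i = ⟨0, hni⟩}) = m' := by
      apply Subtype.ext
      show Function.update (Function.update m'.1 i a) i ⟨0, hni⟩ = m'.1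
      rw [Function.update_idem]
      funext s
      by_cases hsi : s = i
      · subst hsi; rw [Function.update_self]; exact m'.2.symm
      · rw [Function.update_of_ne hsi]
    rw [he]

lemma finrank_fiberSubmodule (hni : 0 < n i) (U : Submodule F (Fin (n i) → F)) :
    finrank F (fiberSubmodule n i U)
      = (∏ s ∈ Finset.univ.erase i, n s) * finrank F U := by
  rw [(fiberLinearEquiv hni U).finrank_eq, Module.finrank_pi_fintype,
    Finset.sum_const, smul_eq_mul, ← card_base hni, Fintype.card]

end Fiber


section Dual

variable {ι : Type*} [Fintype ι]

lemma mem_dualCode {C : Submodule F (ι → F)} {X : ι → F} :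
    X ∈ dualCode C ↔ ∀ Y ∈ C, ∑ m, X m * Y m = 0 := Iff.rfl

lemma dualCode_le_dualCode {C D : Submodule F (ι → F)} (h : C ≤ D) :
    dualCode D ≤ dualCode C := fun _ hX Y hY => hX Y (h hY)

/-- The standard dot-product bilinear form. -/
noncomputable def dotForm (ι : Type*) [Fintype ι] : LinearMap.BilinForm F (ι → F) :=
  LinearMap.mk₂ F (fun X Y => ∑ m, X m * Y m)
    (fun X X' Y => by simp [add_mul, Finset.sum_add_distrib])
    (fun c X Y => by simp [Finset.mul_sum, mul_assoc])
    (fun X Y Y' => by simp [mul_add, Finset.sum_add_distrib])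
    (fun c X Y => by simp [Finset.mul_sum, mul_left_comm])

lemma dotForm_apply (X Y : ι → F) : dotForm ι X Y = ∑ m, X m * Y m := rfl

lemma dotForm_nondegenerate : (dotForm (F := F) ι).Nondegenerate := by
  classical
  constructor
  all_goals
    intro X h
    funext m
    have := h (Pi.single m 1)
    rw [dotForm_apply] at this
    simpa [Pi.single_apply, mul_ite, ite_mul, Finset.sum_ite_eq'] using this

lemma dotForm_isRefl : (dotForm (F := F) ι).IsRefl := by
  intro X Y h
  rw [dotForm_apply] at h ⊢
  rw [← h]
  exact Finset.sum_congr rfl fun m _ => mul_comm _ _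

lemma dualCode_eq_orthogonal (C : Submodule F (ι → F)) :
    dualCode C = (dotForm ι).orthogonal C := by
  ext X
  rw [mem_dualCode, LinearMap.BilinForm.mem_orthogonal_iff]
  constructor
  · intro h Y hY
    show dotForm ι Y X = 0
    rw [dotForm_apply, ← h Y hY]
    exact Finset.sum_congr rfl fun m _ => mul_comm _ _
  · intro h Y hY
    have := h Y hY
    rw [dotForm_apply] at this
    rw [← this]
    exact Finset.sum_congr rfl fun m _ => mul_comm _ _

lemma finrank_dualCode (C : Submodule F (ι → F)) :
    finrank F (dualCode C) = Fintype.card ι - finrank F C := by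
  rw [dualCode_eq_orthogonal,
    LinearMap.BilinForm.finrank_orthogonal dotForm_nondegenerate C,
    Module.finrank_fintype_fun_eq_card]

end Dual


section FiberDual

variable {r' : ℕ} {n : Fin r' → ℕ} {i : Fin r'}

lemma dualCode_fiberSubmodule (hni : 0 < n i) (U : Submodule F (Fin (n i) → F)) :
    dualCode (fiberSubmodule n i U) = fiberSubmodule n i (dualCode U) := by
  classical
  ext X
  rw [mem_dualCode, mem_fiberSubmodule]
  constructor
  · intro hX m
    rw [mem_dualCode]
    intro u hu
    set z : Fin (n i) := ⟨0, hni⟩ with hz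
    set Y : TSpace F n := fun m'' =>
      if Function.update m'' i z = Function.update m i z then u (m'' i) else 0 with hY
    have hYfib : ∀ m₂ : ∀ s, Fin (n s), (fun a => Y (Function.update m₂ i a))
        = if Function.update m₂ i z = Function.update m i z then u else 0 := by
      intro m₂
      funext a
      rw [hY]
      simp only [Function.update_idem, Function.update_self]
      by_cases hc : Function.update m₂ i z = Function.update m i z
      · rw [if_pos hc, if_pos hc]
      · rw [if_neg hc, if_neg hc]; rfl
    have hYmem : Y ∈ fiberSubmodule n i U := by
      intro m₂
      rw [hYfib m₂]
      by_cases hc : Function.update m₂ i z = Function.update m i z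
      · rw [if_pos hc]; exact hu
      · rw [if_neg hc]; exact U.zero_mem
    have h0 := hX Y hYmem
    rw [sum_fiber hni] at h0
    set m₀ : {m : ∀ s, Fin (n s) // m i = z} :=
      ⟨Function.update m i z, Function.update_self _ _ _⟩ with hm₀
    have hself : ∀ m' : {m : ∀ s, Fin (n s) // m i = z},
        Function.update m'.1 i z = m'.1 := by
      intro m'
      funext s
      by_cases hsi : s = i
      · subst hsi; rw [Function.update_self]; exact m'.2.symm
      · rw [Function.update_of_ne hsi]
    rw [Fintype.sum_eq_single m₀ (fun m' hne => ?_)] at h0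
    · have hterm : ∀ a : Fin (n i),
          X (Function.update m₀.1 i a) * Y (Function.update m₀.1 i a)
            = X (Function.update m i a) * u a := by
        intro a
        have h1 : Function.update m₀.1 i a = Function.update m i a := by
          show Function.update (Function.update m i z) i a = Function.update m i a
          rw [Function.update_idem]
        have h2 : Y (Function.update m i a) = u a := by
          rw [hY]
          show (if Function.update (Function.update m i a) i z = Function.update m i z
            then u ((Function.update m i a) i) else 0) = u a
          rw [Function.update_idem, if_pos rfl, Function.update_self]
        rw [h1, h2]
      show (∑ a, X (Function.update m i a) * u a) = 0
      rw [show (∑ a, X (Function.update m i a) * u a)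
          = ∑ a, X (Function.update m₀.1 i a) * Y (Function.update m₀.1 i a) from
        Finset.sum_congr rfl fun a _ => (hterm a).symm]
      exact h0
    · apply Finset.sum_eq_zero
      intro a _
      have hY0 : Y (Function.update m'.1 i a) = 0 := by
        rw [hY]
        show (if Function.update (Function.update m'.1 i a) i z = Function.update m i z
          then u ((Function.update m'.1 i a) i) else 0) = 0
        rw [Function.update_idem, hself m']
        rw [if_neg]
        intro hc
        exact hne (Subtype.ext hc)
      rw [hY0, mul_zero]
  · intro hX Y hY
    rw [sum_fiber hni]
    apply Finset.sum_eq_zero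
    intro m' _
    exact (hX m'.1) (fun a => Y (Function.update m'.1 i a)) (hY m'.1)

end FiberDual


lemma fiberSubmodule_top {r' : ℕ} {n : Fin r' → ℕ} {i : Fin r'} :
    fiberSubmodule (F := F) n i ⊤ = ⊤ := by
  rw [eq_top_iff]
  intro X _ m
  exact Submodule.mem_top


/-- If `C` is `j`-TBMD w.r.t. `𝒜^R`, then `C` is `j`-TMRD w.r.t. `𝒜^R`. -/
theorem stmt7 {F : Type*} [Field F] [Fintype F] (r : ℕ) (n : Fin (r + 2) → ℕ)
    (hn1 : 2 ≤ n 0) (hmin : ∀ i, n 0 ≤ n i) (hmax : ∀ i, n i ≤ n (Fin.last (r + 1)))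
    (C : Submodule F (TSpace F n)) (j : ℕ) (hj1 : 1 ≤ j) (hjk : j ≤ finrank F ↥C)
    (h : isTBMD n j C) :
    isTMRD n j C := by
  classical
  rw [isTMRD]
  rw [isTBMD] at h
  set N := ∏ s, n s with hN
  have hn0 : 0 < n 0 := by omega
  have hnpos : ∀ s, 0 < n s := fun s => lt_of_lt_of_le hn0 (hmin s)
  have hNpos : 0 < N := Finset.prod_pos (fun s _ => hnpos s)
  have hcard : Fintype.card (∀ s, Fin (n s)) = N := by
    rw [Fintype.card_pi]
    simp [hN]
  have hfinTop : finrank F (TSpace F n) = N := by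
    rw [Module.finrank_fintype_fun_eq_card, hcard]
  set P := ∏ s ∈ Finset.univ.erase 0, n s with hPdef
  have hPN : P * n 0 = N := by
    rw [hN, hPdef, mul_comm, Finset.mul_prod_erase Finset.univ n (Finset.mem_univ 0)]
  have hNdiv : N / n 0 = P := by rw [← hPN, Nat.mul_div_cancel _ hn0]
  have hP0 : 0 < P := by
    rcases Nat.eq_zero_or_pos P with h0 | h1
    · rw [h0, zero_mul] at hPN; omega
    · exact h1
  have hPi : ∀ i : Fin (r + 2), n i = n 0 → (∏ s ∈ Finset.univ.erase i, n s) = P := by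
    intro i hi
    apply Nat.eq_of_mul_eq_mul_right hn0
    rw [hPN, ← hi, mul_comm, Finset.mul_prod_erase Finset.univ n (Finset.mem_univ i), hN]
  set k := finrank F ↥C with hk
  have hkN : k ≤ N := hfinTop ▸ Submodule.finrank_le C
  have hstruct : ∀ A ∈ RavagnaniAnticodes (F := F) n, ∃ u : ℕ, u ≤ n 0 ∧
      finrank F ↥A = P * u ∧ dualCode A ∈ RavagnaniAnticodes (F := F) n := by
    rintro A ⟨i, U, hi0, rfl⟩
    have hnipos : 0 < n i := hnpos i
    refine ⟨finrank F U, ?_, ?_, ?_⟩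
    · rw [← hi0]
      have := Submodule.finrank_le U
      rwa [Module.finrank_fin_fun] at this
    · rw [closureAnticode_update_eq hnipos, finrank_fiberSubmodule hnipos, hPi i hi0]
    · rw [closureAnticode_update_eq hnipos, dualCode_fiberSubmodule hnipos,
        ← closureAnticode_update_eq hnipos (dualCode U)]
      exact ⟨i, dualCode U, hi0, rfl⟩
  have hdual : ∀ A : Submodule F (TSpace F n),
      finrank F ↥(dualCode A) = N - finrank F ↥A := by
    intro A
    rw [finrank_dualCode, hcard]
  have hexists : ∀ u, u ≤ n 0 →
      ∃ A ∈ RavagnaniAnticodes (F := F) n, finrank F ↥A = P * u := by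
    intro u hu
    set b : Fin u → (Fin (n 0) → F) := fun a => Pi.basisFun F (Fin (n 0)) (Fin.castLE hu a)
      with hb
    have hli : LinearIndependent F b :=
      (Pi.basisFun F (Fin (n 0))).linearIndependent.comp _ (Fin.castLE_injective hu)
    refine ⟨closureAnticode n (Function.update (fun s => ⊤) 0 (Submodule.span F (Set.range b))),
      ⟨0, _, rfl, rfl⟩, ?_⟩
    rw [closureAnticode_update_eq hn0, finrank_fiberSubmodule hn0, hPi 0 rfl,
      finrank_span_eq_card hli, Fintype.card_fin]
  have hCne : C ≠ ⊥ := by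
    intro hbot
    rw [hk, hbot, finrank_bot] at hjk
    omega
  set S : Set ℕ := {a | ∃ A ∈ RavagnaniAnticodes (F := F) n,
    j ≤ finrank F ↥(C ⊓ A) ∧ finrank F ↥A = a} with hS
  have htReq : tR n j C = sInf S := by
    rw [tR, if_neg hCne, hS]
  have htopeq : closureAnticode n
      (Function.update (fun s => (⊤ : Submodule F (Fin (n s) → F))) 0 ⊤) = ⊤ := by
    rw [closureAnticode_update_eq hn0, fiberSubmodule_top]
  have htopRav : (⊤ : Submodule F (TSpace F n)) ∈ RavagnaniAnticodes (F := F) n :=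
    ⟨0, ⊤, rfl, htopeq.symm⟩
  have hNmem : N ∈ S := by
    refine ⟨⊤, htopRav, ?_, ?_⟩
    · rw [inf_top_eq]; exact hjk
    · rw [finrank_top, hfinTop]
  have hSne : S.Nonempty := ⟨N, hNmem⟩
  have htmem := Nat.sInf_mem hSne
  set t := sInf S with ht
  obtain ⟨A, hARav, hjCA, hAdim⟩ := htmem
  obtain ⟨u, hu, hAdim', hAdualRav⟩ := hstruct A hARav
  have htN : t ≤ N := Nat.sInf_le hNmem
  rw [htReq] at h
  -- upper (Singleton-type) bound
  set s' := (k - j) / P with hs'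
  have hs'P : P * s' ≤ k - j := by
    rw [mul_comm]; exact Nat.div_mul_le_self _ _
  have hfloor : k - j < P * (s' + 1) := by
    rw [mul_comm]
    exact (Nat.div_lt_iff_lt_mul hP0).mp (Nat.lt_succ_self s')
  have hs'n0 : s' ≤ n 0 := by
    apply Nat.le_of_mul_le_mul_left _ hP0
    calc P * s' ≤ k - j := hs'P
    _ ≤ N := le_trans (Nat.sub_le _ _) hkN
    _ = P * n 0 := hPN.symm
  obtain ⟨A', hA'Rav, hA'dim⟩ := hexists (n 0 - s') (Nat.sub_le _ _)
  have hsum' := Submodule.finrank_sup_add_finrank_inf_eq C A'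
  have hsupleN : finrank F ↥(C ⊔ A') ≤ N := hfinTop ▸ Submodule.finrank_le _
  have hPsplit : P * (n 0 - s') + P * s' = N := by
    rw [← Nat.mul_add, Nat.sub_add_cancel hs'n0, hPN]
  have hjCA' : j ≤ finrank F ↥(C ⊓ A') := by
    rw [hA'dim, ← hk] at hsum'
    omega
  have hub : t ≤ P * (n 0 - s') := Nat.sInf_le ⟨A', hA'Rav, hjCA', hA'dim⟩
  -- TBMD forces C ⊔ A = ⊤
  have hsup : C ⊔ A = ⊤ := by
    by_contra hne
    have h1 : finrank F ↥(C ⊔ A) < N :=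
      lt_of_le_of_ne (hfinTop ▸ Submodule.finrank_le _)
        (fun hEq => hne (Submodule.eq_top_of_finrank_eq (by rw [hEq, hfinTop])))
    have h2 : 1 ≤ finrank F ↥(dualCode (C ⊔ A)) := by
      rw [hdual]; omega
    have hle : dualCode (C ⊔ A) ≤ dualCode C ⊓ dualCode A :=
      le_inf (dualCode_le_dualCode le_sup_left) (dualCode_le_dualCode le_sup_right)
    have h3 : 1 ≤ finrank F ↥(dualCode C ⊓ dualCode A) :=
      le_trans h2 (Submodule.finrank_mono hle)
    have hdne : dualCode C ≠ ⊥ := by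
      intro hbot
      rw [hbot, bot_inf_eq, finrank_bot] at h3
      omega
    have h4 : tR n 1 (dualCode C) ≤ N - t := by
      rw [tR, if_neg hdne]
      exact Nat.sInf_le ⟨dualCode A, hAdualRav, h3, by rw [hdual, hAdim]⟩
    omega
  have hsum := Submodule.finrank_sup_add_finrank_inf_eq C A
  rw [hsup, finrank_top, hfinTop, hAdim, ← hk] at hsum
  have hA1 : t = P * u := hAdim ▸ hAdim'
  have hN' : N = n 0 * P := by rw [← hPN, mul_comm]
  have hgoal_s : n 0 * (k - j) / N = s' := by
    rw [hs', hN', Nat.mul_div_mul_left _ _ hn0]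
  have hu1 : u ≤ n 0 - s' :=
    Nat.le_of_mul_le_mul_left (by rw [← hA1]; exact hub) hP0
  have hPu : P * (n 0 - u) + P * u = N := by
    rw [← Nat.mul_add, Nat.sub_add_cancel hu, hPN]
  have hlt : n 0 - u < s' + 1 :=
    Nat.lt_of_mul_lt_mul_left (a := P) (by omega)
  have hueq : u = n 0 - s' := by omega
  rw [htReq, hNdiv, hgoal_s]
  rw [hueq] at hA1
  omega

end TensorPaper
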